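/- Splitting inequalities for local dimension: if Q is the split of a finite poset P and R is the split-in-place of P, then ldim(P) ≤ ldim(R) ≤ 2·ldim(Q) − 1 and ldim(Q) ≤ ldim(R) ≤ 2 + ldim(P). -/

import Mathlib

/-- A linear extension of the partial order on `α`: a linear order relation
containing the partial order. -/
def IsLinearExtension {α : Type*} [PartialOrder α] (r : α → α → Prop) : Prop :=
  IsLinearOrder α r ∧ ∀ x y : α, x ≤ y → r x y

/-- `P` has a realizer of size `d`: `d` linear extensions whose intersection is the order. -/
def HasRealizer (α : Type*) [PartialOrder α] (d : ℕ) : Prop :=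
  ∃ L : Fin d → (α → α → Prop),
    (∀ i, IsLinearExtension (L i)) ∧ (∀ x y : α, (∀ i, L i x y) → x ≤ y)

/-- The Dushnik–Miller dimension of a poset. -/
noncomputable def dimDM (α : Type*) [PartialOrder α] : ℕ :=
  sInf {d | 0 < d ∧ HasRealizer α d}

/-- A Boolean realizer of size `d`: `d` linear orders on the ground set together with a
"decoder" `τ` determining the order from the query vector. -/
def HasBooleanRealizer (α : Type*) [PartialOrder α] (d : ℕ) : Prop :=
  ∃ (B : Fin d → (α → α → Prop)) (τ : (Fin d → Prop) → Prop),
    (∀ i, IsLinearOrder α (B i)) ∧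
    ∀ x y : α, x ≠ y → (x < y ↔ τ (fun i => B i x y))

/-- The Boolean dimension of a poset. -/
noncomputable def bdim (α : Type*) [PartialOrder α] : ℕ :=
  sInf {d | 0 < d ∧ HasBooleanRealizer α d}

/-- A partial linear extension of the poset `α`: a linear extension of a subposet. -/
structure PLE (α : Type*) [PartialOrder α] where
  S : Set α
  r : α → α → Prop
  mem_of_rel : ∀ x y, r x y → x ∈ S ∧ y ∈ S
  refl : ∀ x ∈ S, r x x
  antisymm' : ∀ x y, r x y → r y x → x = y
  trans' : ∀ x y z, r x y → r y z → r x z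
  total : ∀ x ∈ S, ∀ y ∈ S, r x y ∨ r y x
  extends_le : ∀ x ∈ S, ∀ y ∈ S, x ≤ y → r x y

/-- A family of ple's is a local realizer when every comparability appears in some member
and every incomparable pair is reversed in some member. -/
def IsLocalRealizer {α : Type*} [PartialOrder α] {t : ℕ} (L : Fin t → PLE α) : Prop :=
  (∀ x y : α, x ≤ y → ∃ i, x ∈ (L i).S ∧ y ∈ (L i).S) ∧
  (∀ x y : α, ¬ x ≤ y → ¬ y ≤ x → ∃ i, (L i).r y x)

/-- The local dimension of a poset. -/
noncomputable def ldim (α : Type*) [PartialOrder α] : ℕ :=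
  sInf {k | 0 < k ∧ ∃ (t : ℕ) (L : Fin t → PLE α),
    IsLocalRealizer L ∧ ∀ u : α, ({i | u ∈ (L i).S} : Set (Fin t)).ncard ≤ k}

/-- The split of a poset `α`: `(false, x)` is the minimal element `x'`,
`(true, y)` is the maximal element `y''`, and `x' < y''` iff `x ≤ y` in `α`. -/
def Split (α : Type*) := Bool × α

instance (α : Type*) [PartialOrder α] : PartialOrder (Split α) where
  le p q := p = q ∨ (p.1 = false ∧ q.1 = true ∧ p.2 ≤ q.2)
  le_refl p := Or.inl rfl
  le_trans := by
    rintro p q r (rfl | ⟨h1, h2, h3⟩) h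
    · exact h
    · rcases h with rfl | ⟨g1, g2, g3⟩
      · exact Or.inr ⟨h1, h2, h3⟩
      · rw [h2] at g1; exact absurd g1 (by simp)
  le_antisymm := by
    rintro p q (rfl | ⟨h1, h2, h3⟩) h
    · rfl
    · rcases h with rfl | ⟨g1, g2, g3⟩
      · rfl
      · rw [h2] at g1; exact absurd g1 (by simp)

/-- The split-in-place of a poset `α`: tag `0` gives the new minimal element `x'`,
tag `1` the original element `x`, tag `2` the new maximal element `x''`.
`x'` is covered only by `x`, and `x''` covers only `x`. -/
def SplitIP (α : Type*) := α × Fin 3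

instance (α : Type*) [PartialOrder α] : PartialOrder (SplitIP α) where
  le p q := p = q ∨ (p.2 < q.2 ∧ p.1 ≤ q.1) ∨ (p.2 = 1 ∧ q.2 = 1 ∧ p.1 ≤ q.1)
  le_refl p := Or.inl rfl
  le_trans := by
    rintro p q r (rfl | ⟨h1, h2⟩ | ⟨h1, h2, h3⟩) hqr
    · exact hqr
    · rcases hqr with rfl | ⟨g1, g2⟩ | ⟨g1, g2, g3⟩
      · exact Or.inr (Or.inl ⟨h1, h2⟩)
      · exact Or.inr (Or.inl ⟨h1.trans g1, h2.trans g2⟩)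
      · exact Or.inr (Or.inl ⟨by rw [g2, ← g1]; exact h1, h2.trans g3⟩)
    · rcases hqr with rfl | ⟨g1, g2⟩ | ⟨g1, g2, g3⟩
      · exact Or.inr (Or.inr ⟨h1, h2, h3⟩)
      · exact Or.inr (Or.inl ⟨by rw [h1, ← h2]; exact g1, h3.trans g2⟩)
      · exact Or.inr (Or.inr ⟨h1, g2, h3.trans g3⟩)
  le_antisymm := by
    rintro p q (rfl | ⟨h1, h2⟩ | ⟨h1, h2, h3⟩) hqp
    · rfl
    · rcases hqp with rfl | ⟨g1, g2⟩ | ⟨g1, g2, g3⟩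
      · rfl
      · exact absurd (h1.trans g1) (lt_irrefl _)
      · rw [g1, g2] at h1; exact absurd h1 (lt_irrefl _)
    · rcases hqp with rfl | ⟨g1, g2⟩ | ⟨g1, g2, g3⟩
      · rfl
      · rw [h1, h2] at g1; exact absurd g1 (lt_irrefl _)
      · exact Prod.ext (le_antisymm h3 g3) (h1.trans h2.symm)

section LdimSplitAux

open Set

open scoped Classical

variable {α : Type*} [PartialOrder α]

instance [Fintype α] : Fintype (Split α) := inferInstanceAs (Fintype (Bool × α))
instance [Fintype α] : Fintype (SplitIP α) := inferInstanceAs (Fintype (α × Fin 3))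

/-- The defining set of `ldim`. -/
def ldimSet (α : Type*) [PartialOrder α] : Set ℕ :=
  {k | 0 < k ∧ ∃ (t : ℕ) (L : Fin t → PLE α),
    IsLocalRealizer L ∧ ∀ u : α, ({i | u ∈ (L i).S} : Set (Fin t)).ncard ≤ k}

lemma ldim_eq_sInf (α : Type*) [PartialOrder α] : ldim α = sInf (ldimSet α) := rfl

/-- A generic PLE from an order preserving, injective key into a linear order. -/
def ofKey (S : Set α) {β : Type*} [LinearOrder β] (κ : α → β)
    (hinj : ∀ x ∈ S, ∀ y ∈ S, κ x = κ y → x = y)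
    (hmono : ∀ x ∈ S, ∀ y ∈ S, x ≤ y → κ x ≤ κ y) : PLE α where
  S := S
  r a b := a ∈ S ∧ b ∈ S ∧ κ a ≤ κ b
  mem_of_rel _ _ h := ⟨h.1, h.2.1⟩
  refl x hx := ⟨hx, hx, le_rfl⟩
  antisymm' x y h h' := hinj x h.1 y h.2.1 (le_antisymm h.2.2 h'.2.2)
  trans' x y z h h' := ⟨h.1, h'.2.1, h.2.2.trans h'.2.2⟩
  total x hx y hy := (le_total (κ x) (κ y)).imp (fun h => ⟨hx, hy, h⟩) (fun h => ⟨hy, hx, h⟩)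
  extends_le x hx y hy h := ⟨hx, hy, hmono x hx y hy h⟩

/-- the fixed linear extension of `α`. -/
noncomputable def toL (α : Type*) [PartialOrder α] : α → LinearExtension α :=
  fun x => toLinearExtension x

lemma toL_mono {x y : α} (h : x ≤ y) : toL α x ≤ toL α y := toLinearExtension.monotone h

lemma toL_inj {x y : α} (h : toL α x = toL α y) : x = y := h

lemma toL_strict {x y : α} (h : x ≤ y) (hne : x ≠ y) : toL α x < toL α y :=
  lt_of_le_of_ne (toL_mono h) (fun hh => hne (toL_inj hh))

/-- the two-element PLE. -/
noncomputable def pairPLE (x y : α) : PLE α :=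
  ofKey {x, y} (fun a => if a = (if y < x then y else x) then (0 : ℕ) else 1)
    (by
      intro a ha b hb hab
      simp only [Set.mem_insert_iff, Set.mem_singleton_iff] at ha hb
      by_cases hyx : y < x <;> simp only [hyx, if_true, if_false] at hab <;>
        split_ifs at hab with h1 h2 <;>
          rcases ha with rfl | rfl <;> rcases hb with rfl | rfl <;>
            first | rfl | omega | simp_all)
    (by
      intro a ha b hb hle
      simp only [Set.mem_insert_iff, Set.mem_singleton_iff] at ha hb
      by_cases hyx : y < x <;> simp only [hyx, if_true, if_false] <;>
        split_ifs with h1 h2 <;> try norm_num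
      · rename_i h2
        have hle' : a ≤ y := h2 ▸ hle
        rcases ha with rfl | rfl
        · exact lt_irrefl y (lt_of_lt_of_le hyx hle')
        · exact h1 rfl
      · rename_i h2
        have hle' : a ≤ x := h2 ▸ hle
        rcases ha with rfl | rfl
        · exact h1 rfl
        · exact hyx (lt_of_le_of_ne hle' (fun hh => h1 hh)))

lemma ldimSet_nonempty (α : Type*) [PartialOrder α] [Fintype α] :
    (ldimSet α).Nonempty := by
  classical
  set n := Fintype.card (α × α) with hn
  set e : Fin n ≃ α × α := (Fintype.equivFin (α × α)).symm with he
  refine ⟨n + 1, Nat.succ_pos n, n, fun i => pairPLE (e i).1 (e i).2, ⟨?_, ?_⟩, ?_⟩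
  · intro x y _
    refine ⟨e.symm (x, y), ?_, ?_⟩ <;>
      · simp only [Equiv.apply_symm_apply]
        show _ ∈ ({x, y} : Set α)
        simp
  · intro x y hxy hyx
    refine ⟨e.symm (y, x), ?_⟩
    simp only [Equiv.apply_symm_apply]
    show (pairPLE y x).r y x
    refine ⟨Or.inl rfl, Or.inr rfl, ?_⟩
    have hxy' : ¬ x < y := fun h => hxy h.le
    have hne : x ≠ y := fun h => hxy h.le
    rw [if_neg hxy']
    simp [hne]
  · intro u
    calc ({i | u ∈ (pairPLE (e i).1 (e i).2).S} : Set (Fin n)).ncard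
        ≤ (Set.univ : Set (Fin n)).ncard := Set.ncard_le_ncard (Set.subset_univ _) (Set.toFinite _)
      _ = n := by simp [Set.ncard_univ]
      _ ≤ n + 1 := Nat.le_succ n

lemma ldim_mem (α : Type*) [PartialOrder α] [Fintype α] : ldim α ∈ ldimSet α :=
  Nat.sInf_mem (ldimSet_nonempty α)

-- Basic order facts for Split and SplitIP
def pr (x : α) : Split α := (false, x)
def db (x : α) : Split α := (true, x)

lemma pr_le_db {x y : α} : pr x ≤ db y ↔ x ≤ y := by
  constructor
  · rintro (h | ⟨-, -, h⟩)
    · exact absurd (congrArg Prod.fst h) (by simp [pr, db])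
    · exact h
  · intro h; exact Or.inr ⟨rfl, rfl, h⟩

lemma not_db_le_pr {x y : α} : ¬ db x ≤ pr y := by
  rintro (h | ⟨h, -⟩)
  · exact absurd (congrArg Prod.fst h) (by simp [pr, db])
  · exact absurd h (by simp [db])

lemma pr_le_pr {x y : α} : pr x ≤ pr y ↔ x = y := by
  constructor
  · rintro (h | ⟨-, h, -⟩)
    · exact congrArg Prod.snd h
    · exact absurd h (by simp [pr])
  · rintro rfl; exact le_refl _

lemma db_le_db {x y : α} : db x ≤ db y ↔ x = y := by
  constructor
  · rintro (h | ⟨h, -⟩)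
    · exact congrArg Prod.snd h
    · exact absurd h (by simp [db])
  · rintro rfl; exact le_refl _

lemma SplitIP.base_mono {u v : SplitIP α} (h : u ≤ v) : u.1 ≤ v.1 := by
  rcases h with rfl | ⟨-, h⟩ | ⟨-, -, h⟩
  · exact le_refl _
  · exact h
  · exact h

/-- Pull back a PLE along an order-reflecting map. -/
def pullback {β : Type*} [PartialOrder β] (f : α → β) (hf : ∀ x y, x ≤ y ↔ f x ≤ f y)
    (L : PLE β) : PLE α where
  S := f ⁻¹' L.S
  r a b := L.r (f a) (f b)
  mem_of_rel a b h := L.mem_of_rel _ _ h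
  refl a ha := L.refl _ ha
  antisymm' a b h h' := by
    have heq := L.antisymm' _ _ h h'
    exact le_antisymm ((hf a b).2 heq.le) ((hf b a).2 heq.ge)
  trans' a b c h h' := L.trans' _ _ _ h h'
  total a ha b hb := L.total _ ha _ hb
  extends_le a ha b hb h := L.extends_le _ ha _ hb ((hf a b).1 h)

lemma ldim_le_of_iff {β : Type*} [PartialOrder β] (f : α → β)
    (hf : ∀ x y, x ≤ y ↔ f x ≤ f y) (hβ : (ldimSet β).Nonempty) : ldim α ≤ ldim β := by
  obtain ⟨hpos, t, L, ⟨hcov, hrev⟩, hw⟩ := Nat.sInf_mem hβ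
  refine Nat.sInf_le ⟨hpos, t, fun i => pullback f hf (L i), ⟨?_, ?_⟩, ?_⟩
  · intro x y hxy; exact hcov (f x) (f y) ((hf x y).1 hxy)
  · intro x y h1 h2
    exact hrev (f x) (f y) (fun h => h1 ((hf x y).2 h)) (fun h => h2 ((hf y x).2 h))
  · intro u; exact hw (f u)

lemma fin3_eq_two {s : Fin 3} (h0 : s ≠ 0) (h1 : s ≠ 1) : s = 2 := by
  fin_cases s
  · exact absurd rfl h0
  · exact absurd rfl h1
  · rfl

lemma fin3_ne_zero_of_lt {s t : Fin 3} (h : s < t) : t ≠ 0 := by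
  fin_cases s <;> fin_cases t <;> first | exact absurd h (by decide) | decide

lemma fin3_eq_one_of_lt {s t : Fin 3} (h : s < t) (h0 : s ≠ 0) : s = 1 := by
  fin_cases s <;> fin_cases t <;>
    first | rfl | exact absurd h (by decide) | exact absurd rfl h0

lemma fin3_eq_two_of_one_lt {t : Fin 3} (h : (1 : Fin 3) < t) : t = 2 := by
  fin_cases t <;> first | rfl | exact absurd h (by decide)

/-- Lift a PLE of `α` to `SplitIP α` by replacing each point with the block `x' < x < x''`. -/
def blockLift (L : PLE α) : PLE (SplitIP α) where
  S := {u | u.1 ∈ L.S}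
  r u v := (L.r u.1 v.1 ∧ u.1 ≠ v.1) ∨ (u.1 = v.1 ∧ u.1 ∈ L.S ∧ u.2 ≤ v.2)
  mem_of_rel u v h := by
    rcases h with ⟨h, -⟩ | ⟨h, hS, -⟩
    · exact L.mem_of_rel _ _ h
    · exact ⟨hS, show v.1 ∈ L.S from h ▸ hS⟩
  refl u hu := Or.inr ⟨rfl, hu, le_rfl⟩
  antisymm' u v h h' := by
    rcases h with ⟨h1, hne⟩ | ⟨he, -, ht⟩ <;> rcases h' with ⟨h1', hne'⟩ | ⟨he', hS', ht'⟩
    · exact absurd (L.antisymm' _ _ h1 h1') hne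
    · exact absurd he'.symm hne
    · exact absurd he.symm hne'
    · exact Prod.ext he (le_antisymm ht ht')
  trans' u v w h h' := by
    rcases h with ⟨h1, hne⟩ | ⟨he, hS, ht⟩
    · rcases h' with ⟨h1', hne'⟩ | ⟨he', -, -⟩
      · refine Or.inl ⟨L.trans' _ _ _ h1 h1', fun he => ?_⟩
        exact hne (L.antisymm' _ _ h1 (he ▸ h1'))
      · exact Or.inl ⟨he' ▸ h1, he' ▸ hne⟩
    · rcases h' with ⟨h1', hne'⟩ | ⟨he', hS', ht'⟩
      · exact Or.inl ⟨he ▸ h1', he ▸ hne'⟩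
      · exact Or.inr ⟨he.trans he', hS, ht.trans ht'⟩
  total u hu v hv := by
    by_cases he : u.1 = v.1
    · rcases le_total u.2 v.2 with h | h
      · exact Or.inl (Or.inr ⟨he, hu, h⟩)
      · exact Or.inr (Or.inr ⟨he.symm, hv, h⟩)
    · rcases L.total _ hu _ hv with h | h
      · exact Or.inl (Or.inl ⟨h, he⟩)
      · exact Or.inr (Or.inl ⟨h, Ne.symm he⟩)
  extends_le u hu v hv h := by
    rcases (show u = v ∨ (u.2 < v.2 ∧ u.1 ≤ v.1) ∨ (u.2 = 1 ∧ v.2 = 1 ∧ u.1 ≤ v.1) from h) with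
      rfl | ⟨ht, hle⟩ | ⟨h1, h2, hle⟩
    · exact Or.inr ⟨rfl, hu, le_rfl⟩
    · by_cases he : u.1 = v.1
      · exact Or.inr ⟨he, hu, ht.le⟩
      · exact Or.inl ⟨L.extends_le _ hu _ hv hle, he⟩
    · by_cases he : u.1 = v.1
      · exact Or.inr ⟨he, hu, le_of_eq (h1.trans h2.symm)⟩
      · exact Or.inl ⟨L.extends_le _ hu _ hv hle, he⟩

/-- All primes in reversed order, then middles and doubles in blocks. -/
noncomputable def M2 (α : Type*) [PartialOrder α] : PLE (SplitIP α) :=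
  ofKey Set.univ
    (fun u => if u.2 = 0 then
        (toLex (Sum.inl (OrderDual.toDual (toL α u.1))) :
          (LinearExtension α)ᵒᵈ ⊕ₗ ((LinearExtension α) ×ₗ Fin 3))
      else toLex (Sum.inr (toLex (toL α u.1, u.2))))
    (by
      intro u _ v _ h
      split_ifs at h with h1 h2 h2
      · have h' := toLex.injective h
        have h'' := Sum.inl.inj h'
        exact Prod.ext (toL_inj (OrderDual.toDual.injective h'')) (h1.trans h2.symm)
      · exact absurd (toLex.injective h) (by simp)
      · exact absurd (toLex.injective h) (by simp)
      · have h' := Sum.inr.inj (toLex.injective h)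
        have h'' := toLex.injective h'
        exact Prod.ext (toL_inj (congrArg Prod.fst h'')) (congrArg Prod.snd h''))
    (by
      intro u _ v _ h
      beta_reduce
      rcases (show u = v ∨ (u.2 < v.2 ∧ u.1 ≤ v.1) ∨ (u.2 = 1 ∧ v.2 = 1 ∧ u.1 ≤ v.1) from h) with
        rfl | ⟨ht, hle⟩ | ⟨h1, h2, hle⟩
      · exact le_rfl
      · by_cases h0 : u.2 = 0
        · have hv0 : ¬ v.2 = 0 := fin3_ne_zero_of_lt ht
          rw [if_pos h0, if_neg hv0]
          exact Sum.Lex.inl_le_inr _ _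
        · have hv0 : ¬ v.2 = 0 := fin3_ne_zero_of_lt ht
          rw [if_neg h0, if_neg hv0, Sum.Lex.inr_le_inr_iff, Prod.Lex.le_iff]
          by_cases he : u.1 = v.1
          · exact Or.inr ⟨congrArg (toL α) he, ht.le⟩
          · exact Or.inl (toL_strict hle he)
      · rw [if_neg (h1 ▸ (by decide : ¬ (1:Fin 3) = 0)), if_neg (h2 ▸ (by decide : ¬ (1:Fin 3) = 0)),
          Sum.Lex.inr_le_inr_iff, Prod.Lex.le_iff]
        by_cases he : u.1 = v.1
        · exact Or.inr ⟨congrArg (toL α) he, le_of_eq (h1.trans h2.symm)⟩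
        · exact Or.inl (toL_strict hle he))

/-- Middles in order, then doubles in reversed order. -/
noncomputable def M3 (α : Type*) [PartialOrder α] : PLE (SplitIP α) :=
  ofKey {u : SplitIP α | u.2 ≠ 0}
    (fun u => if u.2 = 1 then
        (toLex (Sum.inl (toL α u.1)) : (LinearExtension α) ⊕ₗ (LinearExtension α)ᵒᵈ)
      else toLex (Sum.inr (OrderDual.toDual (toL α u.1))))
    (by
      intro u hu v hv h
      split_ifs at h with h1 h2 h2
      · exact Prod.ext (toL_inj (Sum.inl.inj (toLex.injective h))) (h1.trans h2.symm)
      · exact absurd (toLex.injective h) (by simp)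
      · exact absurd (toLex.injective h) (by simp)
      · have hu2 : u.2 = 2 := fin3_eq_two hu h1
        have hv2 : v.2 = 2 := fin3_eq_two hv h2
        exact Prod.ext
          (toL_inj (OrderDual.toDual.injective (Sum.inr.inj (toLex.injective h))))
          (hu2.trans hv2.symm))
    (by
      intro u hu v hv h
      beta_reduce
      rcases (show u = v ∨ (u.2 < v.2 ∧ u.1 ≤ v.1) ∨ (u.2 = 1 ∧ v.2 = 1 ∧ u.1 ≤ v.1) from h) with
        rfl | ⟨ht, hle⟩ | ⟨h1, h2, hle⟩
      · exact le_rfl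
      · have hu1 : u.2 = 1 := fin3_eq_one_of_lt ht hu
        have hv2 : v.2 = 2 := fin3_eq_two_of_one_lt (hu1 ▸ ht)
        rw [if_pos hu1, if_neg (by rw [hv2]; decide)]
        exact Sum.Lex.inl_le_inr _ _
      · rw [if_pos h1, if_pos h2, Sum.Lex.inl_le_inl_iff]
        exact toL_mono hle)

lemma M2_r_pp {x y : α} (h : x ≤ y) : (M2 α).r (y, 0) (x, 0) := by
  refine ⟨trivial, trivial, ?_⟩
  dsimp only [M2]
  rw [if_pos rfl, if_pos rfl]
  exact Sum.Lex.inl (OrderDual.toDual_le_toDual.2 (toL_mono h))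

lemma M2_r_po {y x : α} {s : Fin 3} (hs : s ≠ 0) : (M2 α).r (y, 0) (x, s) := by
  refine ⟨trivial, trivial, ?_⟩
  dsimp only [M2]
  rw [if_pos rfl, if_neg hs]
  exact Sum.Lex.sep _ _

lemma M3_r_md {y x : α} : (M3 α).r (y, 1) (x, 2) := by
  refine ⟨(by decide : ((1 : Fin 3) ≠ 0)), (by decide : ((2 : Fin 3) ≠ 0)), ?_⟩
  dsimp only [M3]
  rw [if_pos rfl, if_neg (by decide)]
  exact Sum.Lex.sep _ _

lemma M3_r_dd {x y : α} (h : x ≤ y) : (M3 α).r (y, 2) (x, 2) := by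
  refine ⟨(by decide : ((2 : Fin 3) ≠ 0)), (by decide : ((2 : Fin 3) ≠ 0)), ?_⟩
  dsimp only [M3]
  rw [if_neg (by decide), if_neg (by decide)]
  exact Sum.Lex.inr (OrderDual.toDual_le_toDual.2 (toL_mono h))

lemma ldim_SplitIP_le_add (α : Type*) [PartialOrder α] [Fintype α] :
    ldim (SplitIP α) ≤ 2 + ldim α := by
  classical
  obtain ⟨hpos, t, L, ⟨hcov, hrev⟩, hw⟩ := ldim_mem α
  set L' : Fin (t + 2) → PLE (SplitIP α) :=
    Fin.snoc (Fin.snoc (fun j => blockLift (L j)) (M2 α)) (M3 α) with hL'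
  have hLbl : ∀ i : Fin t, L' (i.castSucc.castSucc) = blockLift (L i) := by
    intro i
    rw [hL', Fin.snoc_castSucc, Fin.snoc_castSucc]
  have hLM2 : L' ((Fin.last t).castSucc) = M2 α := by
    rw [hL', Fin.snoc_castSucc, Fin.snoc_last]
  have hLM3 : L' (Fin.last (t + 1)) = M3 α := by
    rw [hL', Fin.snoc_last]
  rw [ldim_eq_sInf]
  refine Nat.sInf_le ⟨by omega, t + 2, L', ⟨?_, ?_⟩, ?_⟩
  · -- coverage
    intro u v huv
    obtain ⟨i, hx, hy⟩ := hcov u.1 v.1 (SplitIP.base_mono huv)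
    exact ⟨i.castSucc.castSucc, by rw [hLbl i]; exact hx, by rw [hLbl i]; exact hy⟩
  · -- reversals
    rintro ⟨x, s⟩ ⟨y, t2⟩ h1 h2
    by_cases hxy : x ≤ y <;> by_cases hyx : y ≤ x
    · -- x = y
      have hE : x = y := le_antisymm hxy hyx
      subst hE
      rcases lt_trichotomy s t2 with h | h | h
      · exact absurd (Or.inr (Or.inl ⟨h, le_rfl⟩)) h1
      · exact absurd (Or.inl (by rw [h])) h1
      · exact absurd (Or.inr (Or.inl ⟨h, le_rfl⟩)) h2
    · -- x < y strictly
      have hst : ¬ s < t2 := fun hh => h1 (Or.inr (Or.inl ⟨hh, hxy⟩))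
      have h11 : ¬ (s = 1 ∧ t2 = 1) := fun ⟨a, b⟩ => h1 (Or.inr (Or.inr ⟨a, b, hxy⟩))
      fin_cases s <;> fin_cases t2
      · exact ⟨(Fin.last t).castSucc, by rw [hLM2]; exact M2_r_pp hxy⟩
      · exact absurd (by decide) hst
      · exact absurd (by decide) hst
      · exact ⟨(Fin.last t).castSucc, by rw [hLM2]; exact M2_r_po (by decide)⟩
      · exact absurd ⟨rfl, rfl⟩ h11
      · exact absurd (by decide) hst
      · exact ⟨(Fin.last t).castSucc, by rw [hLM2]; exact M2_r_po (by decide)⟩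
      · exact ⟨Fin.last (t + 1), by rw [hLM3]; exact M3_r_md⟩
      · exact ⟨Fin.last (t + 1), by rw [hLM3]; exact M3_r_dd hxy⟩
    · -- y < x strictly
      obtain ⟨i, hyi, hxi⟩ := hcov y x hyx
      refine ⟨i.castSucc.castSucc, ?_⟩
      rw [hLbl i]
      exact Or.inl ⟨L i |>.extends_le y hyi x hxi hyx, fun hh => hxy (le_of_eq hh.symm)⟩
    · -- incomparable
      obtain ⟨i, hi⟩ := hrev x y hxy hyx
      refine ⟨i.castSucc.castSucc, ?_⟩
      rw [hLbl i]
      exact Or.inl ⟨hi, fun hh => hxy (le_of_eq hh.symm)⟩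
  · -- width
    intro u
    have hsub : {i | u ∈ (L' i).S} ⊆
        (fun j : Fin t => j.castSucc.castSucc) '' {j | u.1 ∈ (L j).S} ∪
          {(Fin.last t).castSucc, Fin.last (t + 1)} := by
      intro i hi
      rcases Fin.eq_castSucc_or_eq_last i with ⟨i', rfl⟩ | rfl
      · rcases Fin.eq_castSucc_or_eq_last i' with ⟨j, rfl⟩ | rfl
        · left
          refine ⟨j, ?_, rfl⟩
          rw [Set.mem_setOf_eq, hLbl j] at hi
          exact hi
        · exact Or.inr (Or.inl rfl)
      · exact Or.inr (Or.inr rfl)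
    have hinj : Function.Injective (fun j : Fin t => j.castSucc.castSucc) :=
      fun a b hab => Fin.castSucc_injective _ (Fin.castSucc_injective _ hab)
    calc ({i | u ∈ (L' i).S} : Set (Fin (t + 2))).ncard
        ≤ ((fun j : Fin t => j.castSucc.castSucc) '' {j | u.1 ∈ (L j).S} ∪
            {(Fin.last t).castSucc, Fin.last (t + 1)}).ncard :=
          Set.ncard_le_ncard hsub (Set.toFinite _)
      _ ≤ ((fun j : Fin t => j.castSucc.castSucc) '' {j | u.1 ∈ (L j).S}).ncard +
            ({(Fin.last t).castSucc, Fin.last (t + 1)} : Set (Fin (t + 2))).ncard :=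
          Set.ncard_union_le _ _
      _ ≤ ldim α + 2 := by
          refine add_le_add ?_ ?_
          · rw [Set.ncard_image_of_injective _ hinj]
            exact hw u.1
          · exact (Set.ncard_insert_le _ _).trans (by simp)
      _ = 2 + ldim α := by omega

-- ======================= midLift: PLEs for ldim R ≤ 2 ldim Q - 1 =======================

variable (T : PLE (Split α))

/-- ground set of the lifted PLE. -/
def mS : Set (SplitIP α) :=
  {u | (u.2 = 0 ∧ pr u.1 ∈ T.S) ∨ (u.2 = 2 ∧ db u.1 ∈ T.S) ∨
    (u.2 = 1 ∧ (pr u.1 ∈ T.S ∨ db u.1 ∈ T.S))}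

/-- the non-middle Split-element corresponding to a non-middle element. -/
def nm (u : SplitIP α) : Split α := if u.2 = 0 then pr u.1 else db u.1

/-- the `T.r`-downset attached to an element. -/
def mC (u : SplitIP α) : Set (Split α) :=
  if u.2 = 1 then {a | ∃ z, z ≤ u.1 ∧ pr z ∈ T.S ∧ T.r a (pr z)} else {a | T.r a (nm u)}

/-- tie-breaking rank: primes, then doubles, then middles. -/
def tr3 : Fin 3 → ℕ := fun s => if s = 1 then 2 else if s = 0 then 0 else 1

lemma fin3_cases (s : Fin 3) : s = 0 ∨ s = 1 ∨ s = 2 := by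
  fin_cases s
  · exact Or.inl rfl
  · exact Or.inr (Or.inl rfl)
  · exact Or.inr (Or.inr rfl)

lemma fin3_not_two_lt (t2 : Fin 3) : ¬ (2 : Fin 3) < t2 := by
  rcases fin3_cases t2 with rfl | rfl | rfl <;> decide

lemma fin3_not_lt_zero (s : Fin 3) : ¬ s < (0 : Fin 3) := by
  rcases fin3_cases s with rfl | rfl | rfl <;> decide

lemma tr3_inj : ∀ s t : Fin 3, tr3 s = tr3 t → s = t := by decide

/-- the order relation of the lifted PLE. -/
def mR (u v : SplitIP α) : Prop :=
  u ∈ mS T ∧ v ∈ mS T ∧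
    (mC T u ⊂ mC T v ∨ (mC T u = mC T v ∧
      (tr3 u.2 < tr3 v.2 ∨ (tr3 u.2 = tr3 v.2 ∧ toL α u.1 ≤ toL α v.1))))

lemma mC_mem_T {u : SplitIP α} {a : Split α} (h : a ∈ mC T u) : a ∈ T.S := by
  unfold mC at h
  split_ifs at h
  · obtain ⟨z, -, -, hr⟩ := h
    exact (T.mem_of_rel _ _ hr).1
  · exact (T.mem_of_rel _ _ h).1

lemma mC_dc {u : SplitIP α} {a b : Split α} (hab : T.r a b) (hb : b ∈ mC T u) :
    a ∈ mC T u := by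
  unfold mC at *
  split_ifs at hb ⊢
  · obtain ⟨z, h1, h2, h3⟩ := hb
    exact ⟨z, h1, h2, T.trans' _ _ _ hab h3⟩
  · exact T.trans' _ _ _ hab hb

lemma mC_total (u v : SplitIP α) : mC T u ⊆ mC T v ∨ mC T v ⊆ mC T u := by
  by_cases h : mC T u ⊆ mC T v
  · exact Or.inl h
  · right
    rw [Set.not_subset] at h
    obtain ⟨a, hau, hav⟩ := h
    intro b hbv
    rcases T.total a (mC_mem_T T hau) b (mC_mem_T T hbv) with hab | hba
    · exact absurd (mC_dc T hab hbv) hav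
    · exact mC_dc T hba hau

lemma ssubset_or_eq' {β : Type*} {s t : Set β} (h : s ⊆ t) : s ⊂ t ∨ s = t := by
  by_cases he : t ⊆ s
  · exact Or.inr (Set.Subset.antisymm h he)
  · exact Or.inl (HasSubset.Subset.ssubset_of_not_subset h he)

lemma mS0 {x : α} (h : ((x, 0) : SplitIP α) ∈ mS T) : pr x ∈ T.S := by
  rcases h with ⟨-, h⟩ | ⟨h, -⟩ | ⟨h, -⟩
  · exact h
  · exact absurd h (by decide : ¬ (0 : Fin 3) = 2)
  · exact absurd h (by decide : ¬ (0 : Fin 3) = 1)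

lemma mS2 {x : α} (h : ((x, 2) : SplitIP α) ∈ mS T) : db x ∈ T.S := by
  rcases h with ⟨h, -⟩ | ⟨-, h⟩ | ⟨h, -⟩
  · exact absurd h (by decide : ¬ (2 : Fin 3) = 0)
  · exact h
  · exact absurd h (by decide : ¬ (2 : Fin 3) = 1)

lemma mS1 {x : α} (h : ((x, 1) : SplitIP α) ∈ mS T) : pr x ∈ T.S ∨ db x ∈ T.S := by
  rcases h with ⟨h, -⟩ | ⟨h, -⟩ | ⟨-, h⟩
  · exact absurd h (by decide : ¬ (1 : Fin 3) = 0)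
  · exact absurd h (by decide : ¬ (1 : Fin 3) = 2)
  · exact h

lemma mS_mk0 {x : α} (h : pr x ∈ T.S) : ((x, 0) : SplitIP α) ∈ mS T := Or.inl ⟨rfl, h⟩
lemma mS_mk2 {x : α} (h : db x ∈ T.S) : ((x, 2) : SplitIP α) ∈ mS T := Or.inr (Or.inl ⟨rfl, h⟩)
lemma mS_mk1p {x : α} (h : pr x ∈ T.S) : ((x, 1) : SplitIP α) ∈ mS T :=
  Or.inr (Or.inr ⟨rfl, Or.inl h⟩)
lemma mS_mk1d {x : α} (h : db x ∈ T.S) : ((x, 1) : SplitIP α) ∈ mS T :=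
  Or.inr (Or.inr ⟨rfl, Or.inr h⟩)

lemma nm0 {x : α} : nm ((x, 0) : SplitIP α) = pr x := if_pos rfl
lemma nm2 {x : α} : nm ((x, 2) : SplitIP α) = db x := if_neg (by decide : ¬ (2 : Fin 3) = 0)

lemma nm_mem_T {u : SplitIP α} (hu : u ∈ mS T) (h : u.2 ≠ 1) : nm u ∈ T.S := by
  unfold nm
  rcases hu with ⟨h0, hm⟩ | ⟨h2, hm⟩ | ⟨h1, -⟩
  · rw [if_pos h0]; exact hm
  · rw [if_neg (h2 ▸ (by decide : ¬ (2 : Fin 3) = 0))]; exact hm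
  · exact absurd h1 h

lemma mC_of_nonmid {u : SplitIP α} (h : u.2 ≠ 1) : mC T u = {a | T.r a (nm u)} :=
  if_neg h

lemma mC_of_mid (x : α) :
    mC T ((x, 1) : SplitIP α) = {a | ∃ z, z ≤ x ∧ pr z ∈ T.S ∧ T.r a (pr z)} := if_pos rfl

/-- The PLE of `SplitIP α` built from a PLE of `Split α`. -/
def midLift : PLE (SplitIP α) where
  S := mS T
  r := mR T
  mem_of_rel _ _ h := ⟨h.1, h.2.1⟩
  refl u hu := ⟨hu, hu, Or.inr ⟨rfl, Or.inr ⟨rfl, le_rfl⟩⟩⟩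
  antisymm' u v h h' := by
    obtain ⟨-, -, h⟩ := h
    obtain ⟨-, -, h'⟩ := h'
    rcases h with hss | ⟨he, hlex⟩
    · rcases h' with hss' | ⟨he', -⟩
      · exact absurd hss'.subset hss.not_subset
      · exact absurd he'.symm hss.ne
    · rcases h' with hss' | ⟨he', hlex'⟩
      · exact absurd he.symm hss'.ne
      · rcases hlex with hlt | ⟨ht, hle⟩ <;> rcases hlex' with hlt' | ⟨ht', hle'⟩
        · omega
        · omega
        · omega
        · exact Prod.ext (toL_inj (le_antisymm hle hle')) (tr3_inj _ _ ht)
  trans' u v w h h' := by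
    obtain ⟨hu, hv, h⟩ := h
    obtain ⟨-, hw', h'⟩ := h'
    refine ⟨hu, hw', ?_⟩
    rcases h with hss | ⟨he, hlex⟩
    · rcases h' with hss' | ⟨he', -⟩
      · exact Or.inl (hss.trans hss')
      · exact Or.inl (he' ▸ hss)
    · rcases h' with hss' | ⟨he', hlex'⟩
      · exact Or.inl (he ▸ hss')
      · refine Or.inr ⟨he.trans he', ?_⟩
        rcases hlex with hlt | ⟨ht, hle⟩ <;> rcases hlex' with hlt' | ⟨ht', hle'⟩
        · exact Or.inl (hlt.trans hlt')
        · exact Or.inl (ht' ▸ hlt)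
        · exact Or.inl (ht ▸ hlt')
        · exact Or.inr ⟨ht.trans ht', hle.trans hle'⟩
  total u hu v hv := by
    have key : ∀ a b : SplitIP α, a ∈ mS T → b ∈ mS T → mC T a ⊆ mC T b →
        mR T a b ∨ mR T b a := by
      intro a b ha hb hsub
      rcases ssubset_or_eq' hsub with hss | he
      · exact Or.inl ⟨ha, hb, Or.inl hss⟩
      · rcases Nat.lt_trichotomy (tr3 a.2) (tr3 b.2) with hlt | heq | hgt
        · exact Or.inl ⟨ha, hb, Or.inr ⟨he, Or.inl hlt⟩⟩
        · rcases le_total (toL α a.1) (toL α b.1) with hl | hl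
          · exact Or.inl ⟨ha, hb, Or.inr ⟨he, Or.inr ⟨heq, hl⟩⟩⟩
          · exact Or.inr ⟨hb, ha, Or.inr ⟨he.symm, Or.inr ⟨heq.symm, hl⟩⟩⟩
        · exact Or.inr ⟨hb, ha, Or.inr ⟨he.symm, Or.inl hgt⟩⟩
    rcases mC_total T u v with hsub | hsub
    · exact key u v hu hv hsub
    · exact (key v u hv hu hsub).symm
  extends_le u hu v hv hle := by
    obtain ⟨x, s⟩ := u
    obtain ⟨y, t2⟩ := v
    refine ⟨hu, hv, ?_⟩
    rcases (show (x, s) = (y, t2) ∨ (s < t2 ∧ x ≤ y) ∨ (s = 1 ∧ t2 = 1 ∧ x ≤ y) from hle)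
      with he | ⟨hlt, hxy⟩ | ⟨h1, h2, hxy⟩
    · rw [he]
      exact Or.inr ⟨rfl, Or.inr ⟨rfl, le_rfl⟩⟩
    · rcases fin3_cases s with rfl | rfl | rfl <;> rcases fin3_cases t2 with rfl | rfl | rfl <;>
        first
          | exact absurd hlt (by decide)
          | skip
      · -- (0, 1)
        have hprx : pr x ∈ T.S := mS0 T hu
        have hsub : mC T (x, 0) ⊆ mC T (y, 1) := by
          rw [mC_of_nonmid T (u := ((x, 0) : SplitIP α)) (by decide : ¬ (0 : Fin 3) = 1), mC_of_mid, nm0]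
          intro a ha
          exact ⟨x, hxy, hprx, ha⟩
        rcases ssubset_or_eq' hsub with hss | heq
        · exact Or.inl hss
        · exact Or.inr ⟨heq, Or.inl (by decide : tr3 0 < tr3 1)⟩
      · -- (0, 2)
        have hprx : pr x ∈ T.S := mS0 T hu
        have hdby : db y ∈ T.S := mS2 T hv
        have hr : T.r (pr x) (db y) := T.extends_le _ hprx _ hdby (pr_le_db.2 hxy)
        refine Or.inl ?_
        rw [mC_of_nonmid T (u := ((x, 0) : SplitIP α)) (by decide : ¬ (0 : Fin 3) = 1),
          mC_of_nonmid T (u := ((y, 2) : SplitIP α)) (by decide : ¬ (2 : Fin 3) = 1), nm0, nm2]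
        refine HasSubset.Subset.ssubset_of_not_subset ?_ ?_
        · intro a ha
          exact T.trans' _ _ _ ha hr
        · intro hcon
          have hback : T.r (db y) (pr x) := hcon (T.refl _ hdby)
          have := T.antisymm' _ _ hback hr
          exact absurd (congrArg Prod.fst this) (by simp [pr, db])
      · -- (1, 2)
        have hdby : db y ∈ T.S := mS2 T hv
        refine Or.inl ?_
        rw [mC_of_mid, mC_of_nonmid T (u := ((y, 2) : SplitIP α)) (by decide : ¬ (2 : Fin 3) = 1), nm2]
        refine HasSubset.Subset.ssubset_of_not_subset ?_ ?_
        · rintro a ⟨z, hz, hpz, ha⟩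
          exact T.trans' _ _ _ ha (T.extends_le _ hpz _ hdby (pr_le_db.2 (hz.trans hxy)))
        · intro hcon
          obtain ⟨z, hz, hpz, hrz⟩ := hcon (T.refl _ hdby)
          have := T.antisymm' _ _ hrz (T.extends_le _ hpz _ hdby (pr_le_db.2 (hz.trans hxy)))
          exact absurd (congrArg Prod.fst this) (by simp [pr, db])
    · -- middles
      subst h1
      subst h2
      have hsub : mC T (x, 1) ⊆ mC T (y, 1) := by
        rw [mC_of_mid, mC_of_mid]
        rintro a ⟨z, hz, hpz, ha⟩
        exact ⟨z, hz.trans hxy, hpz, ha⟩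
      rcases ssubset_or_eq' hsub with hss | heq
      · exact Or.inl hss
      · exact Or.inr ⟨heq, Or.inr ⟨rfl, toL_mono hxy⟩⟩

lemma mR_step {u v : SplitIP α} (hu : u ∈ mS T) (hv : v ∈ mS T)
    (hu1 : u.2 ≠ 1) (hv1 : v.2 ≠ 1) (hne : nm u ≠ nm v) (hr : T.r (nm u) (nm v)) :
    (midLift T).r u v := by
  refine ⟨hu, hv, Or.inl ?_⟩
  rw [mC_of_nonmid T hu1, mC_of_nonmid T hv1]
  refine HasSubset.Subset.ssubset_of_not_subset ?_ ?_
  · intro a ha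
    exact T.trans' _ _ _ ha hr
  · intro hcon
    have hback : T.r (nm v) (nm u) := hcon (T.refl _ (nm_mem_T T hv hv1))
    exact hne (T.antisymm' _ _ hr hback)

lemma midLift_mid_up {y : α} (h : db y ∈ T.S) : (midLift T).r (y, 1) (y, 2) :=
  (midLift T).extends_le _ (mS_mk1d T h) _ (mS_mk2 T h)
    (Or.inr (Or.inl ⟨(by decide : (1 : Fin 3) < 2), le_rfl⟩))

lemma midLift_mid_dn {x : α} (h : pr x ∈ T.S) : (midLift T).r (x, 0) (x, 1) :=
  (midLift T).extends_le _ (mS_mk0 T h) _ (mS_mk1p T h)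
    (Or.inr (Or.inl ⟨(by decide : (0 : Fin 3) < 1), le_rfl⟩))

/-- Build the reversal `(y,t2)` below `(x,s)` from a `T.r`-reversal of the
corresponding nonmiddle elements. -/
lemma midLift_rev {x y : α} (s t2 : Fin 3)
    (hr : T.r (if t2 = 0 then pr y else db y) (if s = 2 then db x else pr x))
    (hne : (if t2 = 0 then pr y else db y) ≠ (if s = 2 then db x else pr x)) :
    (midLift T).r (y, t2) (x, s) := by
  rcases fin3_cases s with rfl | rfl | rfl <;> rcases fin3_cases t2 with rfl | rfl | rfl <;>
    simp only [(by decide : ((0 : Fin 3) = 0) = True), (by decide : ((1 : Fin 3) = 0) = False),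
      (by decide : ((2 : Fin 3) = 0) = False), (by decide : ((0 : Fin 3) = 2) = False),
      (by decide : ((1 : Fin 3) = 2) = False), (by decide : ((2 : Fin 3) = 2) = True),
      if_true, if_false] at hr hne
  -- s = 0
  · exact mR_step T (mS_mk0 T (T.mem_of_rel _ _ hr).1) (mS_mk0 T (T.mem_of_rel _ _ hr).2)
      (by decide : ¬ (0 : Fin 3) = 1) (by decide : ¬ (0 : Fin 3) = 1)
      (by rw [nm0, nm0]; exact hne) (by rw [nm0, nm0]; exact hr)
  · refine (midLift T).trans' _ _ _ (midLift_mid_up T (T.mem_of_rel _ _ hr).1) ?_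
    exact mR_step T (mS_mk2 T (T.mem_of_rel _ _ hr).1) (mS_mk0 T (T.mem_of_rel _ _ hr).2)
      (by decide : ¬ (2 : Fin 3) = 1) (by decide : ¬ (0 : Fin 3) = 1)
      (by rw [nm2, nm0]; exact hne) (by rw [nm2, nm0]; exact hr)
  · exact mR_step T (mS_mk2 T (T.mem_of_rel _ _ hr).1) (mS_mk0 T (T.mem_of_rel _ _ hr).2)
      (by decide : ¬ (2 : Fin 3) = 1) (by decide : ¬ (0 : Fin 3) = 1)
      (by rw [nm2, nm0]; exact hne) (by rw [nm2, nm0]; exact hr)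
  -- s = 1
  · refine (midLift T).trans' _ _ _ ?_ (midLift_mid_dn T (T.mem_of_rel _ _ hr).2)
    exact mR_step T (mS_mk0 T (T.mem_of_rel _ _ hr).1) (mS_mk0 T (T.mem_of_rel _ _ hr).2)
      (by decide : ¬ (0 : Fin 3) = 1) (by decide : ¬ (0 : Fin 3) = 1)
      (by rw [nm0, nm0]; exact hne) (by rw [nm0, nm0]; exact hr)
  · refine (midLift T).trans' _ _ _ (midLift_mid_up T (T.mem_of_rel _ _ hr).1) ?_
    refine (midLift T).trans' _ _ _ ?_ (midLift_mid_dn T (T.mem_of_rel _ _ hr).2)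
    exact mR_step T (mS_mk2 T (T.mem_of_rel _ _ hr).1) (mS_mk0 T (T.mem_of_rel _ _ hr).2)
      (by decide : ¬ (2 : Fin 3) = 1) (by decide : ¬ (0 : Fin 3) = 1)
      (by rw [nm2, nm0]; exact hne) (by rw [nm2, nm0]; exact hr)
  · refine (midLift T).trans' _ _ _ ?_ (midLift_mid_dn T (T.mem_of_rel _ _ hr).2)
    exact mR_step T (mS_mk2 T (T.mem_of_rel _ _ hr).1) (mS_mk0 T (T.mem_of_rel _ _ hr).2)
      (by decide : ¬ (2 : Fin 3) = 1) (by decide : ¬ (0 : Fin 3) = 1)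
      (by rw [nm2, nm0]; exact hne) (by rw [nm2, nm0]; exact hr)
  -- s = 2
  · exact mR_step T (mS_mk0 T (T.mem_of_rel _ _ hr).1) (mS_mk2 T (T.mem_of_rel _ _ hr).2)
      (by decide : ¬ (0 : Fin 3) = 1) (by decide : ¬ (2 : Fin 3) = 1)
      (by rw [nm0, nm2]; exact hne) (by rw [nm0, nm2]; exact hr)
  · refine (midLift T).trans' _ _ _ (midLift_mid_up T (T.mem_of_rel _ _ hr).1) ?_
    exact mR_step T (mS_mk2 T (T.mem_of_rel _ _ hr).1) (mS_mk2 T (T.mem_of_rel _ _ hr).2)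
      (by decide : ¬ (2 : Fin 3) = 1) (by decide : ¬ (2 : Fin 3) = 1)
      (by rw [nm2, nm2]; exact hne) (by rw [nm2, nm2]; exact hr)
  · exact mR_step T (mS_mk2 T (T.mem_of_rel _ _ hr).1) (mS_mk2 T (T.mem_of_rel _ _ hr).2)
      (by decide : ¬ (2 : Fin 3) = 1) (by decide : ¬ (2 : Fin 3) = 1)
      (by rw [nm2, nm2]; exact hne) (by rw [nm2, nm2]; exact hr)

lemma ldim_SplitIP_le_mul (α : Type*) [PartialOrder α] [Fintype α] :
    ldim (SplitIP α) ≤ 2 * ldim (Split α) - 1 := by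
  classical
  obtain ⟨hpos, m, P, ⟨hcovQ, hrevQ⟩, hwQ⟩ := ldim_mem (Split α)
  rw [ldim_eq_sInf]
  refine Nat.sInf_le ⟨by omega, m, fun j => midLift (P j), ⟨?_, ?_⟩, ?_⟩
  · -- coverage
    rintro ⟨x, s⟩ ⟨y, t2⟩ huv
    rcases (show ((x, s) : SplitIP α) = (y, t2) ∨ (s < t2 ∧ x ≤ y) ∨ (s = 1 ∧ t2 = 1 ∧ x ≤ y)
        from huv) with he | ⟨hlt, hxy⟩ | ⟨h1, h2, hxy⟩
    · obtain ⟨j, hpj, hdj⟩ := hcovQ (pr x) (db x) (pr_le_db.2 le_rfl)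
      have hm : ((x, s) : SplitIP α) ∈ mS (P j) := by
        rcases fin3_cases s with rfl | rfl | rfl
        · exact mS_mk0 _ hpj
        · exact mS_mk1p _ hpj
        · exact mS_mk2 _ hdj
      exact ⟨j, hm, he ▸ hm⟩
    · obtain ⟨j, hpj, hdj⟩ := hcovQ (pr x) (db y) (pr_le_db.2 hxy)
      refine ⟨j, ?_, ?_⟩
      · rcases fin3_cases s with rfl | rfl | rfl
        · exact mS_mk0 _ hpj
        · exact mS_mk1p _ hpj
        · exact absurd hlt (fin3_not_two_lt t2)
      · rcases fin3_cases t2 with rfl | rfl | rfl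
        · exact absurd hlt (fin3_not_lt_zero s)
        · exact mS_mk1d _ hdj
        · exact mS_mk2 _ hdj
    · subst h1; subst h2
      obtain ⟨j, hpj, hdj⟩ := hcovQ (pr x) (db y) (pr_le_db.2 hxy)
      exact ⟨j, mS_mk1p _ hpj, mS_mk1d _ hdj⟩
  · -- reversals
    rintro ⟨x, s⟩ ⟨y, t2⟩ h1 h2
    rcases fin3_cases s with rfl | rfl | rfl <;> rcases fin3_cases t2 with rfl | rfl | rfl
    · -- (0,0) : pr x vs pr y
      have hq1 : ¬ pr x ≤ pr y := fun hc => h1 (Or.inl (Prod.ext (pr_le_pr.1 hc) rfl))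
      have hq2 : ¬ pr y ≤ pr x := fun hc => h2 (Or.inl (Prod.ext (pr_le_pr.1 hc) rfl))
      obtain ⟨j, hρ⟩ := hrevQ _ _ hq1 hq2
      exact ⟨j, midLift_rev (P j) 0 0 hρ (fun he => hq2 (le_of_eq he))⟩
    · -- (0,1) : pr x vs db y
      have hq1 : ¬ pr x ≤ db y :=
        fun hc => h1 (Or.inr (Or.inl ⟨(by decide : (0 : Fin 3) < 1), pr_le_db.1 hc⟩))
      obtain ⟨j, hρ⟩ := hrevQ _ _ hq1 not_db_le_pr
      exact ⟨j, midLift_rev (P j) 0 1 hρ (fun he => not_db_le_pr (le_of_eq he))⟩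
    · -- (0,2)
      have hq1 : ¬ pr x ≤ db y :=
        fun hc => h1 (Or.inr (Or.inl ⟨(by decide : (0 : Fin 3) < 2), pr_le_db.1 hc⟩))
      obtain ⟨j, hρ⟩ := hrevQ _ _ hq1 not_db_le_pr
      exact ⟨j, midLift_rev (P j) 0 2 hρ (fun he => not_db_le_pr (le_of_eq he))⟩
    · -- (1,0)
      have hq1 : ¬ pr x ≤ pr y := fun hc =>
        h2 (Or.inr (Or.inl ⟨(by decide : (0 : Fin 3) < 1), le_of_eq (pr_le_pr.1 hc).symm⟩))
      have hq2 : ¬ pr y ≤ pr x := fun hc =>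
        h2 (Or.inr (Or.inl ⟨(by decide : (0 : Fin 3) < 1), le_of_eq (pr_le_pr.1 hc)⟩))
      obtain ⟨j, hρ⟩ := hrevQ _ _ hq1 hq2
      exact ⟨j, midLift_rev (P j) 1 0 hρ (fun he => hq2 (le_of_eq he))⟩
    · -- (1,1)
      have hq1 : ¬ pr x ≤ db y :=
        fun hc => h1 (Or.inr (Or.inr ⟨rfl, rfl, pr_le_db.1 hc⟩))
      obtain ⟨j, hρ⟩ := hrevQ _ _ hq1 not_db_le_pr
      exact ⟨j, midLift_rev (P j) 1 1 hρ (fun he => not_db_le_pr (le_of_eq he))⟩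
    · -- (1,2)
      have hq1 : ¬ pr x ≤ db y :=
        fun hc => h1 (Or.inr (Or.inl ⟨(by decide : (1 : Fin 3) < 2), pr_le_db.1 hc⟩))
      obtain ⟨j, hρ⟩ := hrevQ _ _ hq1 not_db_le_pr
      exact ⟨j, midLift_rev (P j) 1 2 hρ (fun he => not_db_le_pr (le_of_eq he))⟩
    · -- (2,0)
      have hq2 : ¬ pr y ≤ db x :=
        fun hc => h2 (Or.inr (Or.inl ⟨(by decide : (0 : Fin 3) < 2), pr_le_db.1 hc⟩))
      obtain ⟨j, hρ⟩ := hrevQ _ _ not_db_le_pr hq2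
      exact ⟨j, midLift_rev (P j) 2 0 hρ (fun he => hq2 (le_of_eq he))⟩
    · -- (2,1)
      have hq1 : ¬ db x ≤ db y := fun hc =>
        h2 (Or.inr (Or.inl ⟨(by decide : (1 : Fin 3) < 2), le_of_eq (db_le_db.1 hc).symm⟩))
      have hq2 : ¬ db y ≤ db x := fun hc =>
        h2 (Or.inr (Or.inl ⟨(by decide : (1 : Fin 3) < 2), le_of_eq (db_le_db.1 hc)⟩))
      obtain ⟨j, hρ⟩ := hrevQ _ _ hq1 hq2
      exact ⟨j, midLift_rev (P j) 2 1 hρ (fun he => hq2 (le_of_eq he))⟩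
    · -- (2,2)
      have hq1 : ¬ db x ≤ db y := fun hc => h1 (Or.inl (Prod.ext (db_le_db.1 hc) rfl))
      have hq2 : ¬ db y ≤ db x := fun hc => h2 (Or.inl (Prod.ext (db_le_db.1 hc) rfl))
      obtain ⟨j, hρ⟩ := hrevQ _ _ hq1 hq2
      exact ⟨j, midLift_rev (P j) 2 2 hρ (fun he => hq2 (le_of_eq he))⟩
  · -- width
    rintro ⟨x, s⟩
    rcases fin3_cases s with rfl | rfl | rfl
    · refine le_trans (le_trans (Set.ncard_le_ncard ?_ (Set.toFinite _)) (hwQ (pr x))) (by omega)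
      intro j hj
      exact mS0 _ hj
    · have hU : {j | ((x, 1) : SplitIP α) ∈ mS (P j)} =
          {j | pr x ∈ (P j).S} ∪ {j | db x ∈ (P j).S} := by
        ext j
        constructor
        · intro hj
          exact mS1 _ hj
        · rintro (hj | hj)
          · exact mS_mk1p _ hj
          · exact mS_mk1d _ hj
      obtain ⟨j0, hj1, hj2⟩ := hcovQ (pr x) (db x) (pr_le_db.2 le_rfl)
      have hint : 1 ≤ ({j | pr x ∈ (P j).S} ∩ {j | db x ∈ (P j).S}).ncard :=
        (Set.ncard_pos (Set.toFinite _)).2 ⟨j0, hj1, hj2⟩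
      have hsum := Set.ncard_union_add_ncard_inter {j | pr x ∈ (P j).S} {j | db x ∈ (P j).S}
        (Set.toFinite _) (Set.toFinite _)
      have ha := hwQ (pr x)
      have hb := hwQ (db x)
      show ({j | ((x, 1) : SplitIP α) ∈ mS (P j)} : Set (Fin m)).ncard ≤ 2 * ldim (Split α) - 1
      rw [hU]
      omega
    · refine le_trans (le_trans (Set.ncard_le_ncard ?_ (Set.toFinite _)) (hwQ (db x))) (by omega)
      intro j hj
      exact mS2 _ hj

lemma ldim_le_SplitIP (α : Type*) [PartialOrder α] [Fintype α] :
    ldim α ≤ ldim (SplitIP α) := by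
  refine ldim_le_of_iff (fun x => ((x, 1) : SplitIP α)) ?_ (ldimSet_nonempty _)
  intro x y
  constructor
  · intro h
    exact Or.inr (Or.inr ⟨rfl, rfl, h⟩)
  · rintro (he | ⟨hlt, hle⟩ | ⟨-, -, hle⟩)
    · exact le_of_eq (congrArg Prod.fst he)
    · exact absurd hlt (lt_irrefl _)
    · exact hle

lemma ldim_Split_le_SplitIP (α : Type*) [PartialOrder α] [Fintype α] :
    ldim (Split α) ≤ ldim (SplitIP α) := by
  refine ldim_le_of_iff (fun p : Split α => ((p.2, if p.1 then 2 else 0) : SplitIP α)) ?_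
    (ldimSet_nonempty _)
  rintro ⟨b, x⟩ ⟨c, y⟩
  constructor
  · rintro (he | ⟨h1, h2, h3⟩)
    · cases he
      exact Or.inl rfl
    · dsimp only at h1 h2 ⊢
      subst h1
      subst h2
      exact Or.inr (Or.inl
        ⟨(by decide : (if (false : Bool) = true then (2 : Fin 3) else 0) <
            (if (true : Bool) = true then (2 : Fin 3) else 0)), h3⟩)
  · rintro (he | ⟨hlt, hle⟩ | ⟨he1, -, -⟩)
    · have h2 : x = y := congrArg Prod.fst he
      have h1 : (if b = true then (2 : Fin 3) else 0) = (if c = true then (2 : Fin 3) else 0) :=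
        congrArg Prod.snd he
      cases b <;> cases c
      · exact Or.inl (by rw [h2])
      · exact absurd h1 (by decide)
      · exact absurd h1 (by decide)
      · exact Or.inl (by rw [h2])
    · dsimp only at hlt hle
      cases b <;> cases c
      · exact absurd hlt (by simp)
      · exact Or.inr ⟨rfl, rfl, hle⟩
      · exact absurd hlt (by simp)
      · exact absurd hlt (by simp)
    · dsimp only at he1
      cases b
      · exact absurd he1 (by simp)
      · exact absurd he1 (by simp)

end LdimSplitAux

/-- Splitting inequalities for local dimension, where `Q` is the split and `R`
the split-in-place of `P`:
`ldim P ≤ ldim R ≤ 2·ldim Q − 1` and `ldim Q ≤ ldim R ≤ 2 + ldim P`. -/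
theorem ldim_split (α : Type*) [Fintype α] [PartialOrder α] :
    ldim α ≤ ldim (SplitIP α) ∧ ldim (SplitIP α) ≤ 2 * ldim (Split α) - 1 ∧
    ldim (Split α) ≤ ldim (SplitIP α) ∧ ldim (SplitIP α) ≤ 2 + ldim α := by
  exact ⟨ldim_le_SplitIP α, ldim_SplitIP_le_mul α, ldim_Split_le_SplitIP α,
    ldim_SplitIP_le_add α⟩
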